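/- Let B : ℝ³ → ℝ³ be a smooth (C^∞) vector field with compact support satisfying div B = 0 everywhere, and define W : ℝ³ → ℝ³ by W(x) = (1/(4π)) ∫ B(y)/‖x − y‖ dy (componentwise Newtonian potential, integral over ℝ³ with respect to Lebesgue measure). Then W is differentiable and div W = 0 everywhere, where div W = ∂₁W₁ + ∂₂W₂ + ∂₃W₃. -/

import Mathlib

open MeasureTheory Metric Set Filter
open scoped Convolution

noncomputable section

local notation "E3" => EuclideanSpace ℝ (Fin 3)

lemma locallyIntegrable_inv_norm :
    LocallyIntegrable (fun z : E3 => ‖z‖⁻¹) volume := by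
  rw [locallyIntegrable_iff]
  intro K hK
  obtain ⟨R, hR⟩ := hK.isBounded.subset_closedBall 0
  refine IntegrableOn.mono_set ?_ hR
  constructor
  · exact (measurable_norm.inv).aestronglyMeasurable
  · rw [hasFiniteIntegral_iff_norm]
    have hnn : ∀ z : E3, (0:ℝ) ≤ ‖z‖⁻¹ := fun z => inv_nonneg.2 (norm_nonneg z)
    have hmeq : ∀ z : E3, ENNReal.ofReal ‖(‖z‖⁻¹ : ℝ)‖ = ENNReal.ofReal (‖z‖⁻¹) := by
      intro z; rw [Real.norm_of_nonneg (hnn z)]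
    simp_rw [hmeq]
    rw [lintegral_eq_lintegral_meas_lt _ (Eventually.of_forall hnn)
      (measurable_norm.inv.aemeasurable)]
    -- bound the measure of superlevel sets
    have key : ∀ t ∈ Ioi (0:ℝ),
        (volume.restrict (closedBall (0:E3) R)) {z : E3 | t < ‖z‖⁻¹}
          ≤ (Ioc (0:ℝ) 1).indicator (fun _ => volume (closedBall (0:E3) R)) t
            + (Ioi (1:ℝ)).indicator
                (fun t => ENNReal.ofReal (t⁻¹ ^ 3) * volume (ball (0:E3) 1)) t := by
      intro t ht
      rcases le_or_gt t 1 with h1 | h1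
      · refine le_trans ?_ le_self_add
        rw [indicator_of_mem (show t ∈ Ioc (0:ℝ) 1 from ⟨ht, h1⟩)]
        exact le_trans (measure_mono (subset_univ _))
          (by rw [Measure.restrict_apply_univ])
      · refine le_trans ?_ le_add_self
        rw [indicator_of_mem (show t ∈ Ioi (1:ℝ) from h1)]
        have hsub : {z : E3 | t < ‖z‖⁻¹} ⊆ ball (0:E3) t⁻¹ := by
          intro z hz
          simp only [mem_setOf_eq] at hz
          simp only [mem_ball, dist_zero_right]
          rcases eq_or_ne ‖z‖ 0 with h0 | h0
          · rw [h0]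
            have : (0:ℝ) < t := ht
            positivity
          · have := inv_strictAnti₀ ht hz
            rwa [inv_inv] at this
        calc (volume.restrict (closedBall (0:E3) R)) {z : E3 | t < ‖z‖⁻¹}
            ≤ volume (ball (0:E3) t⁻¹) :=
              le_trans (Measure.restrict_apply_le _ _) (measure_mono hsub)
          _ = ENNReal.ofReal (t⁻¹ ^ 3) * volume (ball (0:E3) 1) := by
              rw [Measure.addHaar_ball _ _ (by
                have : (0:ℝ) < t := ht
                positivity : (0:ℝ) ≤ t⁻¹)]
              simp [finrank_euclideanSpace_fin]
    refine lt_of_le_of_lt (setLIntegral_mono' measurableSet_Ioi key) ?_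
    rw [lintegral_add_left]
    · refine ENNReal.add_lt_top.2 ⟨?_, ?_⟩
      · refine lt_of_le_of_lt (lintegral_indicator_le _ _) ?_
        rw [setLIntegral_const]
        exact ENNReal.mul_lt_top (measure_closedBall_lt_top) (by simp)
      · refine lt_of_le_of_lt (lintegral_indicator_le _ _) ?_
        rw [Measure.restrict_restrict measurableSet_Ioi]
        have hIo : Ioi (1:ℝ) ∩ Ioi (0:ℝ) = Ioi 1 := by
          rw [inter_eq_left]; exact fun x (hx : (1:ℝ) < x) => show (0:ℝ) < x from lt_trans zero_lt_one hx
        rw [hIo, lintegral_mul_const' _ _ (measure_ball_lt_top.ne)]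
        refine ENNReal.mul_lt_top ?_ measure_ball_lt_top
        have hint : IntegrableOn (fun t : ℝ => t ^ (-3 : ℝ)) (Ioi (1:ℝ)) volume :=
          integrableOn_Ioi_rpow_of_lt (by norm_num) zero_lt_one
        have := hint.lintegral_lt_top
        refine lt_of_le_of_lt (le_of_eq ?_) this
        refine setLIntegral_congr_fun measurableSet_Ioi ?_
        intro t ht
        have htpos : (0:ℝ) < t := lt_trans zero_lt_one ht
        have h3 : (t:ℝ) ^ (-3:ℝ) = (t ^ (3:ℕ))⁻¹ := by
          rw [← Real.rpow_natCast t 3, ← Real.rpow_neg htpos.le]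
          norm_num
        show ENNReal.ofReal (t⁻¹ ^ 3) = ENNReal.ofReal (t ^ (-3:ℝ))
        rw [inv_pow, ← h3]
    · exact measurable_const.indicator measurableSet_Ioc


/-- The partial derivative of a scalar function on Euclidean 3-space in the
direction of the `i`-th standard basis vector. -/
def pderiv3 (i : Fin 3) (f : EuclideanSpace ℝ (Fin 3) → ℝ)
    (x : EuclideanSpace ℝ (Fin 3)) : ℝ :=
  fderiv ℝ f x (EuclideanSpace.single i 1)

/-- The divergence of a vector field on Euclidean 3-space. -/
def div3 (F : EuclideanSpace ℝ (Fin 3) → EuclideanSpace ℝ (Fin 3))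
    (x : EuclideanSpace ℝ (Fin 3)) : ℝ :=
  pderiv3 0 (fun y => F y 0) x + pderiv3 1 (fun y => F y 1) x +
    pderiv3 2 (fun y => F y 2) x

/-- The componentwise Newtonian vector potential of a vector field `B`:
`W(x) = (1/(4π)) ∫ B(y)/‖x − y‖ dy`. -/
def newtonianVecPotential
    (B : EuclideanSpace ℝ (Fin 3) → EuclideanSpace ℝ (Fin 3))
    (x : EuclideanSpace ℝ (Fin 3)) : EuclideanSpace ℝ (Fin 3) :=
  (1 / (4 * Real.pi)) • ∫ y, ‖x - y‖⁻¹ • B y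

/-- The Newtonian vector potential of a divergence-free smooth compactly
supported field is divergence-free. -/
theorem div_newtonianVecPotential
    (B : EuclideanSpace ℝ (Fin 3) → EuclideanSpace ℝ (Fin 3))
    (hB : ContDiff ℝ (⊤ : ℕ∞) B) (hBc : HasCompactSupport B)
    (hdiv : ∀ x, div3 B x = 0) :
    Differentiable ℝ (newtonianVecPotential B) ∧
      ∀ x, div3 (newtonianVecPotential B) x = 0 := by
  have hB1 : ContDiff ℝ 1 B := hB.of_le (by simp)
  have hk := locallyIntegrable_inv_norm
  set L : ℝ →L[ℝ] EuclideanSpace ℝ (Fin 3) →L[ℝ] EuclideanSpace ℝ (Fin 3) :=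
    ContinuousLinearMap.lsmul ℝ ℝ with hL
  have hWeq : newtonianVecPotential B =
      fun x => (1 / (4 * Real.pi)) • ((fun z : E3 => ‖z‖⁻¹) ⋆[L, volume] B) x := by
    funext x
    unfold newtonianVecPotential
    congr 1
    rw [convolution_def, ← integral_sub_left_eq_self (fun y => ‖x - y‖⁻¹ • B y) volume x]
    congr 1
    funext t
    simp [hL, sub_sub_cancel]
  have hder : ∀ x, HasFDerivAt (newtonianVecPotential B)
      ((1 / (4 * Real.pi)) •
        (((fun z : E3 => ‖z‖⁻¹) ⋆[L.precompR (EuclideanSpace ℝ (Fin 3)), volume]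
          fderiv ℝ B) x)) x := by
    intro x
    rw [hWeq]
    exact (hBc.hasFDerivAt_convolution_right L hk hB1 x).const_smul (1 / (4 * Real.pi) : ℝ)
  have hgcont : Continuous (fderiv ℝ B) := hB.continuous_fderiv (by simp)
  have hBd : Differentiable ℝ B := hB.differentiable (by simp)
  have hgc : ∀ v : E3, HasCompactSupport (fun a => fderiv ℝ B a v) := by
    intro v
    exact (hBc.fderiv ℝ).comp_left (g := fun M : E3 →L[ℝ] E3 => M v)
      (ContinuousLinearMap.zero_apply v)
  have hconvEx : ∀ (x : E3) (v : E3),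
      Integrable (fun t : E3 => ‖t‖⁻¹ • (fderiv ℝ B (x - t) v)) volume := by
    intro x v
    have := (hgc v).convolutionExists_right (L := L) hk
      (hgcont.clm_apply continuous_const) x
    simpa [hL, ConvolutionExistsAt] using this
  have hBcomp : ∀ (i : Fin 3) (z : E3),
      pderiv3 i (fun y => B y i) z = fderiv ℝ B z (EuclideanSpace.single i 1) i := by
    intro i z
    have h := ((EuclideanSpace.proj (𝕜 := ℝ) i).hasFDerivAt.comp z
      (hBd z).hasFDerivAt).fderiv
    unfold pderiv3
    rw [show (fun y => B y i) = (⇑(EuclideanSpace.proj (𝕜 := ℝ) i) ∘ B) from rfl, h]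
    rfl
  have hcoord : ∀ (x : E3) (i : Fin 3),
      pderiv3 i (fun y => newtonianVecPotential B y i) x
        = (1 / (4 * Real.pi)) *
          ∫ t : E3, ‖t‖⁻¹ * (fderiv ℝ B (x - t) (EuclideanSpace.single i 1) i) := by
    intro x i
    have h1 : HasFDerivAt (fun y => newtonianVecPotential B y i)
        ((EuclideanSpace.proj (𝕜 := ℝ) i).comp ((1 / (4 * Real.pi)) •
          (((fun z : E3 => ‖z‖⁻¹) ⋆[L.precompR (EuclideanSpace ℝ (Fin 3)), volume]
            fderiv ℝ B) x))) x :=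
      (EuclideanSpace.proj (𝕜 := ℝ) i).hasFDerivAt.comp x (hder x)
    unfold pderiv3
    rw [h1.fderiv]
    have h2 : ((fun z : E3 => ‖z‖⁻¹) ⋆[L.precompR (EuclideanSpace ℝ (Fin 3)), volume]
          fderiv ℝ B) x (EuclideanSpace.single i 1)
        = ((fun z : E3 => ‖z‖⁻¹) ⋆[L, volume]
            (fun a => fderiv ℝ B a (EuclideanSpace.single i 1))) x :=
      convolution_precompR_apply L hk (hBc.fderiv ℝ) hgcont x (EuclideanSpace.single i 1)
    have h3 : (EuclideanSpace.proj (𝕜 := ℝ) i)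
          (((fun z : E3 => ‖z‖⁻¹) ⋆[L, volume]
            (fun a => fderiv ℝ B a (EuclideanSpace.single i 1))) x)
        = ∫ t : E3, ‖t‖⁻¹ * (fderiv ℝ B (x - t) (EuclideanSpace.single i 1) i) := by
      rw [convolution_def]
      rw [← ContinuousLinearMap.integral_comp_comm _
        (by simpa [hL] using hconvEx x (EuclideanSpace.single i 1))]
      congr 1
    simp only [ContinuousLinearMap.coe_comp', Function.comp_apply,
      ContinuousLinearMap.coe_smul', Pi.smul_apply, h2]
    rw [_root_.map_smul, smul_eq_mul, h3]
  have hI : ∀ (x : E3) (i : Fin 3), Integrable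
      (fun t : E3 => ‖t‖⁻¹ * (fderiv ℝ B (x - t) (EuclideanSpace.single i 1) i)) volume := by
    intro x i
    have := (EuclideanSpace.proj (𝕜 := ℝ) i).integrable_comp
      (hconvEx x (EuclideanSpace.single i 1))
    simpa using this
  have hdivW : ∀ x : E3, div3 (newtonianVecPotential B) x = 0 := by
    intro x
    have hsum := integral_finset_sum (μ := volume) Finset.univ
      (f := fun (i : Fin 3) (t : E3) =>
        ‖t‖⁻¹ * (fderiv ℝ B (x - t) (EuclideanSpace.single i 1) i))
      (fun i _ => hI x i)
    simp only [Fin.sum_univ_three] at hsum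
    rw [div3, hcoord x 0, hcoord x 1, hcoord x 2, ← mul_add, ← mul_add, ← hsum]
    have : ∀ t : E3,
        ‖t‖⁻¹ * (fderiv ℝ B (x - t) (EuclideanSpace.single 0 1) 0)
          + ‖t‖⁻¹ * (fderiv ℝ B (x - t) (EuclideanSpace.single 1 1) 1)
          + ‖t‖⁻¹ * (fderiv ℝ B (x - t) (EuclideanSpace.single 2 1) 2)
        = ‖t‖⁻¹ * div3 B (x - t) := by
      intro t
      rw [div3, hBcomp 0, hBcomp 1, hBcomp 2]
      ring
    simp only [this]
    simp [hdiv]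
  exact ⟨fun x => (hder x).differentiableAt, hdivW⟩

end
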